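/- For every m ≥ 0, the number of distinct prime factors of d_m is a power of 2; that is, there exists s ∈ ℕ with ω(d_m) = 2^s. -/

import Mathlib

/-- `Z a b = a*b / gcd(a,b)^2`. -/
def Zfun (a b : ℕ) : ℕ := a * b / Nat.gcd a b ^ 2

/-- The array: `ent 0 n` is the `n`-th prime (0-indexed), and
`ent (m+1) n = Z (ent m n) (ent m (n+1))`. -/
noncomputable def ent : ℕ → ℕ → ℕ
  | 0, n => Nat.nth Nat.Prime n
  | m + 1, n => Zfun (ent m n) (ent m (n + 1))

/-- The left edge `d_m`. -/
noncomputable def dseq (m : ℕ) : ℕ := ent m 0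

/-! Since `Z a b` of two squarefree numbers is the product of the primes dividing exactly one of
them, induction on `m` shows that `a_{m,n}` is the product of the primes `p_{n+k}` over the `k` with
`binom(m, k)` odd: the sets of such `k` obey Pascal's rule mod 2. By Lucas' theorem there are
`2 ^ (number of binary ones of m)` of them (Glaisher). -/

open Finset
open scoped symmDiff

theorem Zfun_prod_of_pairwise_coprime {ι : Type*} [DecidableEq ι] {f : ι → ℕ}
    (hcop : Pairwise (Function.onFun Nat.Coprime f)) (hpos : ∀ i, 0 < f i) (S T : Finset ι) :
    Zfun (∏ i ∈ S, f i) (∏ i ∈ T, f i) = ∏ i ∈ S ∆ T, f i := by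
  set I := ∏ i ∈ S ∩ T, f i
  have hS : I * ∏ i ∈ S \ T, f i = ∏ i ∈ S, f i := prod_inter_mul_prod_sdiff S T f
  have hT : I * ∏ i ∈ T \ S, f i = ∏ i ∈ T, f i := by
    rw [← prod_inter_mul_prod_sdiff T S f, inter_comm]
  have hcoprime : Nat.Coprime (∏ i ∈ S \ T, f i) (∏ i ∈ T \ S, f i) :=
    Nat.Coprime.prod_left fun i hi => Nat.Coprime.prod_right fun j hj =>
      hcop fun hij => (mem_sdiff.mp hi).2 (hij ▸ (mem_sdiff.mp hj).1)
  have hgcd : Nat.gcd (∏ i ∈ S, f i) (∏ i ∈ T, f i) = I := by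
    rw [← hS, ← hT, Nat.gcd_mul_left, hcoprime, mul_one]
  have hI : 0 < I := prod_pos fun i _ => hpos i
  rw [Zfun, hgcd, ← hS, ← hT, mul_mul_mul_comm, ← sq,
    Nat.mul_div_cancel_left _ (pow_pos hI 2), symmDiff_def, sup_eq_union,
    prod_union disjoint_sdiff_sdiff]

theorem le_of_odd_choose {n k : ℕ} (h : Odd (n.choose k)) : k ≤ n := by
  by_contra hk
  rw [Nat.choose_eq_zero_of_lt (not_le.mp hk)] at h
  exact Nat.not_odd_zero h

theorem odd_choose_iff_mod_two_div_two (m k : ℕ) :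
    Odd (m.choose k) ↔ Odd ((m % 2).choose (k % 2)) ∧ Odd ((m / 2).choose (k / 2)) := by
  have hlucas : m.choose k ≡ (m % 2).choose (k % 2) * (m / 2).choose (k / 2) [MOD 2] :=
    Choose.choose_modEq_choose_mod_mul_choose_div_nat
  rw [← Nat.odd_mul, Nat.odd_iff, Nat.odd_iff, hlucas]

def oddChoose (m : ℕ) : Finset ℕ := {k ∈ range (m + 1) | Odd (m.choose k)}

theorem mem_oddChoose {m k : ℕ} : k ∈ oddChoose m ↔ Odd (m.choose k) :=
  ⟨fun h => (mem_filter.mp h).2,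
    fun h => mem_filter.mpr ⟨mem_range_succ_iff.mpr (le_of_odd_choose h), h⟩⟩

theorem oddChoose_succ (m : ℕ) :
    oddChoose (m + 1) = oddChoose m ∆ (oddChoose m).image (· + 1) := by
  ext k
  rcases k with _ | k
  · simp [mem_symmDiff, mem_oddChoose]
  · simp only [mem_symmDiff, mem_image, mem_oddChoose, Nat.add_right_cancel_iff, exists_eq_right,
      Nat.choose_succ_succ', Nat.odd_add', ← Nat.not_odd_iff_even]
    tauto

theorem lt_two_of_mem_oddChoose_mod_two {m a : ℕ} (ha : a ∈ oddChoose (m % 2)) : a < 2 :=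
  (le_of_odd_choose (mem_oddChoose.mp ha)).trans_lt (Nat.mod_lt m two_pos)

theorem oddChoose_eq_image_product (m : ℕ) :
    oddChoose m = (oddChoose (m % 2) ×ˢ oddChoose (m / 2)).image fun x => x.1 + 2 * x.2 := by
  ext k
  simp only [mem_image, mem_product, mem_oddChoose, Prod.exists,
    odd_choose_iff_mod_two_div_two m k]
  constructor
  · exact fun h => ⟨k % 2, k / 2, h, Nat.mod_add_div k 2⟩
  · rintro ⟨a, b, ⟨ha, hb⟩, rfl⟩
    have ha2 := lt_two_of_mem_oddChoose_mod_two (mem_oddChoose.mpr ha)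
    rw [show (a + 2 * b) % 2 = a by omega, show (a + 2 * b) / 2 = b by omega]
    exact ⟨ha, hb⟩

theorem card_oddChoose (m : ℕ) : #(oddChoose m) = 2 ^ (Nat.digits 2 m).sum := by
  induction m using Nat.strong_induction_on with
  | _ m ih =>
  rcases Nat.eq_zero_or_pos m with rfl | hm
  · rfl
  rw [Nat.digits_def' one_lt_two hm, List.sum_cons, pow_add,
    ← ih _ (Nat.div_lt_self hm one_lt_two), oddChoose_eq_image_product, card_image_of_injOn,
    card_product]
  · rcases Nat.mod_two_eq_zero_or_one m with h | h <;> rw [h] <;> rfl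
  · rintro ⟨a, b⟩ hab ⟨a', b'⟩ hab' h
    have ha := lt_two_of_mem_oddChoose_mod_two (mem_product.mp hab).1
    have ha' := lt_two_of_mem_oddChoose_mod_two (mem_product.mp hab').1
    simp only at h
    ext <;> simp only <;> omega

theorem pairwise_coprime_nth_prime_add (n : ℕ) :
    Pairwise (Function.onFun Nat.Coprime fun k => Nat.nth Nat.Prime (n + k)) := fun i j hij =>
  (Nat.coprime_primes (Nat.prime_nth_prime _) (Nat.prime_nth_prime _)).mpr
    fun h => hij (by simpa using Nat.nth_injective Nat.infinite_setOfPred_prime h)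

theorem ent_eq_prod (m n : ℕ) : ent m n = ∏ k ∈ oddChoose m, Nat.nth Nat.Prime (n + k) := by
  induction m generalizing n with
  | zero => simp [ent, show oddChoose 0 = {0} from rfl]
  | succ m ih =>
    have hshift : ∏ k ∈ oddChoose m, Nat.nth Nat.Prime (n + 1 + k) =
        ∏ k ∈ (oddChoose m).image (· + 1), Nat.nth Nat.Prime (n + k) := by
      rw [prod_image fun _ _ _ _ => Nat.succ_inj.mp]
      simp only [add_assoc, add_comm 1]
    rw [ent, ih, ih, hshift, Zfun_prod_of_pairwise_coprime (pairwise_coprime_nth_prime_add n)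
      (fun _ => (Nat.prime_nth_prime _).pos), oddChoose_succ]

theorem omega_d_pow_two (m : ℕ) :
    ∃ s : ℕ, (dseq m).primeFactors.card = 2 ^ s := by
  have hinj : Function.Injective (Nat.nth Nat.Prime) :=
    Nat.nth_injective Nat.infinite_setOfPred_prime
  refine ⟨(Nat.digits 2 m).sum, ?_⟩
  simp only [dseq, ent_eq_prod, zero_add]
  rw [← prod_image (f := fun q => q) fun _ _ _ _ h => hinj h,
    Nat.primeFactors_prod fun _ hq => ?_, card_image_of_injective _ hinj, card_oddChoose]
  obtain ⟨k, -, rfl⟩ := mem_image.mp hq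
  exact Nat.prime_nth_prime k
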